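/- arXiv:2501.00154 — 3 statements merged into one kernel-verified Lean document; each statement's English description precedes it below -/
import Mathlib

section
/- Let L be a linear classifier on {0,1}^d with weights w and threshold t, let x ∈ {0,1}^d, and let s_i = w_i·(2x_i − 1)·(2L(x) − 1) be the feature scores. Suppose i, j are features with s_i ≤ s_j, and y ⊆ x is a partial instance with y_i defined and y_j undefined. Let y' = (y ⊖ i) ⊕ j be the partial instance obtained by undefining coordinate i and setting coordinate j to x_j. Then Pr_{z ∈ comp(y')}[L(z) = L(x)] ≥ Pr_{z ∈ comp(y)}[L(z) = L(x)] under the uniform distribution over completions. -/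
/-! Write `δ_k(z)` for `[z_k ≠ x_k]` and `S(z) = ∑ w_k z_k`. Then
`(2L(x) - 1)(S(z) - S(x)) = -∑ s_k δ_k(z)`, so lowering the total score of the disagreements
of `z` with `x` keeps `L(z) = L(x)`. Exchanging `δ_i` and `δ_j` is an involution of the cube
that maps `comp(y)` onto `comp(y')`, and on `comp(y)`, where `δ_i = 0`, it can only move a
disagreement from `j` to the lower-score feature `i`. -/

/-- Output of the linear classifier with weights `w` and threshold `t` on `z ∈ {0,1}^d`. -/
def linOut {d : ℕ} (w : Fin d → ℚ) (t : ℚ) (z : Fin d → Bool) : Bool :=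
  decide (t ≤ ∑ i, w i * (if z i then 1 else 0))

/-- Completions of a partial instance `y ∈ {0,1,⊥}^d`. -/
def completions {d : ℕ} (y : Fin d → Option Bool) : Finset (Fin d → Bool) :=
  Finset.univ.filter (fun z => ∀ i, ∀ b, y i = some b → z i = b)

/-- `Pr_{z ~ U(y)}[L(z) = L(x)]`, uniform over the completions of `y`. -/
def prSame {d : ℕ} (w : Fin d → ℚ) (t : ℚ) (x : Fin d → Bool)
    (y : Fin d → Option Bool) : ℚ :=
  (((completions y).filter (fun z => linOut w t z = linOut w t x)).card : ℚ)
    / ((completions y).card : ℚ)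

/-- Score of feature `i`: `w_i (2x_i - 1)(2L(x) - 1)`. -/
def score {d : ℕ} (w : Fin d → ℚ) (t : ℚ) (x : Fin d → Bool) (i : Fin d) : ℚ :=
  w i * (2 * (if x i then 1 else 0) - 1) * (2 * (if linOut w t x then 1 else 0) - 1)

/-- `y ⊆ x`: the partial instance `y` agrees with `x` on its defined coordinates. -/
def subsetOf {d : ℕ} (y : Fin d → Option Bool) (x : Fin d → Bool) : Prop :=
  ∀ i, ∀ b, y i = some b → x i = b

open Finset

section

variable {d : ℕ}

def disagreementScore (w : Fin d → ℚ) (t : ℚ) (x z : Fin d → Bool) : ℚ :=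
  ∑ k, if z k = x k then 0 else score w t x k

def linSum (w : Fin d → ℚ) (z : Fin d → Bool) : ℚ :=
  ∑ k, w k * (if z k then 1 else 0)

lemma linOut_eq_decide (w : Fin d → ℚ) (t : ℚ) (z : Fin d → Bool) :
    linOut w t z = decide (t ≤ linSum w z) := rfl

lemma margin_mul_linSum_sub_eq (w : Fin d → ℚ) (t : ℚ) (x z : Fin d → Bool) :
    (2 * (if linOut w t x then 1 else 0) - 1) * (linSum w z - linSum w x) =
      -disagreementScore w t x z := by
  rw [linSum, linSum, ← sum_sub_distrib, mul_sum, disagreementScore, ← sum_neg_distrib]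
  refine sum_congr rfl fun k _ => ?_
  unfold score
  cases z k <;> cases x k <;> simp <;> ring

lemma linOut_eq_of_disagreementScore_le {w : Fin d → ℚ} {t : ℚ} {x z z' : Fin d → Bool}
    (hle : disagreementScore w t x z' ≤ disagreementScore w t x z)
    (hz : linOut w t z = linOut w t x) : linOut w t z' = linOut w t x := by
  have hz' := margin_mul_linSum_sub_eq w t x z'
  have hz0 := margin_mul_linSum_sub_eq w t x z
  rw [linOut_eq_decide] at hz ⊢
  cases hx : linOut w t x
  · rw [hx] at hz hz' hz0
    simp only [decide_eq_false_iff_not, not_le] at hz ⊢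
    simp only [Bool.false_eq_true, if_false] at hz' hz0
    linarith
  · rw [hx] at hz hz' hz0
    simp only [decide_eq_true_eq] at hz ⊢
    simp only [if_true] at hz' hz0
    linarith

def exchange (x : Fin d → Bool) (i j : Fin d) (z : Fin d → Bool) : Fin d → Bool :=
  fun k => if z (Equiv.swap i j k) = x (Equiv.swap i j k) then x k else !x k

lemma exchange_apply_eq_iff (x : Fin d → Bool) (i j : Fin d) (z : Fin d → Bool) (k : Fin d) :
    exchange x i j z k = x k ↔ z (Equiv.swap i j k) = x (Equiv.swap i j k) := by
  unfold exchange
  split_ifs with h <;> simp [h]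

lemma exchange_involutive (x : Fin d → Bool) (i j : Fin d) :
    Function.Involutive (exchange x i j) := by
  intro z
  funext k
  have h := exchange_apply_eq_iff x i j z (Equiv.swap i j k)
  rw [Equiv.swap_apply_self] at h
  change (if exchange x i j z _ = x _ then x k else !x k) = z k
  by_cases hk : z k = x k
  · rw [if_pos (h.mpr hk), hk]
  · rw [if_neg (mt h.mp hk)]
    cases hz : z k <;> cases hx : x k <;> simp_all

lemma disagreementScore_exchange_le {w : Fin d → ℚ} {t : ℚ} {x z : Fin d → Bool} {i j : Fin d}
    (hij : score w t x i ≤ score w t x j) (hzi : z i = x i) :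
    disagreementScore w t x (exchange x i j z) ≤ disagreementScore w t x z := by
  have hreindex : disagreementScore w t x (exchange x i j z) =
      ∑ k, if z k = x k then 0 else score w t x (Equiv.swap i j k) := by
    rw [disagreementScore, ← Equiv.sum_comp (Equiv.swap i j)]
    refine sum_congr rfl fun k _ => ?_
    simp only [exchange_apply_eq_iff, Equiv.swap_apply_self]
  rw [hreindex, disagreementScore]
  refine sum_le_sum fun k _ => ?_
  by_cases hk : z k = x k
  · simp [hk]
  · have hki : k ≠ i := fun h => hk (h ▸ hzi)
    rw [if_neg hk, if_neg hk]
    by_cases hkj : k = j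
    · rw [hkj, Equiv.swap_apply_right]; exact hij
    · rw [Equiv.swap_apply_of_ne_of_ne hki hkj]

lemma mem_completions_iff_of_subsetOf {x : Fin d → Bool} {y : Fin d → Option Bool}
    (hy : subsetOf y x) {z : Fin d → Bool} :
    z ∈ completions y ↔ ∀ k, (y k).isSome → z k = x k := by
  simp only [completions, mem_filter, mem_univ, true_and]
  constructor
  · intro hz k hk
    obtain ⟨b, hb⟩ := Option.isSome_iff_exists.mp hk
    rw [hz k b hb, hy k b hb]
  · intro hz k b hb
    rw [hz k (by simp [hb]), hy k b hb]

lemma exchange_mem_completions_iff {x : Fin d → Bool} {y y' : Fin d → Option Bool}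
    {i j : Fin d} (hy : subsetOf y x) (hy' : subsetOf y' x)
    (hdom : ∀ k, (y' k).isSome = (y (Equiv.swap i j k)).isSome) {z : Fin d → Bool} :
    exchange x i j z ∈ completions y' ↔ z ∈ completions y := by
  rw [mem_completions_iff_of_subsetOf hy', mem_completions_iff_of_subsetOf hy,
    (Equiv.swap i j).forall_congr_right.symm]
  simp only [hdom, exchange_apply_eq_iff, Equiv.swap_apply_self]

lemma prSame_le_of_isSome_eq_swap {w : Fin d → ℚ} {t : ℚ} {x : Fin d → Bool}
    {y y' : Fin d → Option Bool} {i j : Fin d} (hy : subsetOf y x) (hy' : subsetOf y' x)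
    (hdom : ∀ k, (y' k).isSome = (y (Equiv.swap i j k)).isSome) (hyi : (y i).isSome)
    (hij : score w t x i ≤ score w t x j) :
    prSame w t x y ≤ prSame w t x y' := by
  have hmem {z} := exchange_mem_completions_iff (z := z) hy hy' hdom
  have hinv := exchange_involutive x i j
  have hcard : (completions y').card = (completions y).card :=
    card_nbij' (exchange x i j) (exchange x i j)
      (fun z hz => by rwa [mem_coe, ← hmem, hinv]) (fun z hz => hmem.mpr hz)
      (fun z _ => hinv z) (fun z _ => hinv z)
  have hsame : ((completions y).filter (fun z => linOut w t z = linOut w t x)).card ≤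
      ((completions y').filter (fun z => linOut w t z = linOut w t x)).card := by
    refine card_le_card_of_injOn (exchange x i j) (fun z hz => ?_) hinv.injective.injOn
    simp only [mem_coe, mem_filter] at hz ⊢
    have hzi : z i = x i := (mem_completions_iff_of_subsetOf hy).mp hz.1 i hyi
    exact ⟨hmem.mpr hz.1,
      linOut_eq_of_disagreementScore_le (disagreementScore_exchange_le hij hzi) hz.2⟩
  rw [prSame, prSame, hcard]
  exact div_le_div_of_nonneg_right (by exact_mod_cast hsame) (Nat.cast_nonneg _)

end

theorem swap_feature_for_higher_score_general (d : ℕ) (w : Fin d → ℚ) (t : ℚ)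
    (x : Fin d → Bool) (y : Fin d → Option Bool) (hy : subsetOf y x)
    (i j : Fin d) (hij : score w t x i ≤ score w t x j)
    (hyi : (y i).isSome) (hyj : y j = none) :
    prSame w t x y ≤
      prSame w t x (Function.update (Function.update y i none) j (some (x j))) := by
  refine prSame_le_of_isSome_eq_swap hy (fun k b hk => ?_) (fun k => ?_) hyi hij
  · rcases eq_or_ne k j with rfl | hkj
    · simpa using hk
    rcases eq_or_ne k i with rfl | hki
    · simp [hkj] at hk
    · exact hy k b (by simpa [hkj, hki] using hk)
  · rcases eq_or_ne k j with rfl | hkj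
    · simp [hyi]
    rcases eq_or_ne k i with rfl | hki
    · simp [hkj, hyj]
    · simp [hkj, hki, Equiv.swap_apply_of_ne_of_ne hki hkj]

theorem swap_feature_for_higher_score (d : ℕ) (hd : 1 ≤ d) (w : Fin d → ℚ) (t : ℚ)
    (x : Fin d → Bool) (y : Fin d → Option Bool) (hy : subsetOf y x)
    (i j : Fin d) (hij : score w t x i ≤ score w t x j)
    (hyi : (y i).isSome) (hyj : y j = none) :
    prSame w t x y ≤
      prSame w t x (Function.update (Function.update y i none) j (some (x j))) :=
  swap_feature_for_higher_score_general d w t x y hy i j hij hyi hyj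
end

section
/- Let L be a linear classifier on {0,1}^d with weights w, threshold t, instance x, scores sorted decreasingly, and y^(k) the top-k partial instance. Fix δ ∈ (0,1]. Define Min(L, x, δ) as the minimum number of defined coordinates of a partial instance y ⊆ x satisfying Pr_{z ∈ comp(y)}[L(z) = L(x)] ≥ δ. Then Min(L, x, δ) = k if and only if y^(k) is a δ-sufficient reason (its probability guarantee is ≥ δ) and either k = 0 or y^(k−1) is not. -/
/-- `topk x k` is the partial instance defined (agreeing with `x`) exactly on the
first `k` coordinates. -/
def topk {d : ℕ} (x : Fin d → Bool) (k : ℕ) : Fin d → Option Bool :=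
  fun i => if (i : ℕ) < k then some (x i) else none

/-- Number of defined coordinates of a partial instance. -/
def definedCount {d : ℕ} (y : Fin d → Option Bool) : ℕ :=
  (Finset.univ.filter (fun i => (y i).isSome)).card

/-- `Min(L, x, δ)`: the minimum number of defined coordinates of a `δ`-sufficient
reason `y ⊆ x` for `(L, x)`. -/
noncomputable def minSR {d : ℕ} (w : Fin d → ℚ) (t : ℚ) (x : Fin d → Bool) (δ : ℚ) : ℕ :=
  sInf {k : ℕ | ∃ y : Fin d → Option Bool,
    subsetOf y x ∧ definedCount y = k ∧ δ ≤ prSame w t x y}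

/-!
Write a completion of a partial instance `y ⊆ x` as `x` with the coordinates of a set `F` of
free coordinates flipped. Flipping coordinate `i` moves the value of the linear form towards the
opposite class by exactly `score i`, so whether a completion still has the label of `x` depends
only on the total score of `F`, and agreement is preserved when that total decreases.

Hence, for a fixed number of defined coordinates, it is best to leave free the coordinates of
lowest score: matching the `r`-th free coordinate of any `y` with the `r`-th of the last ones
lowers every score and maps agreeing flip sets to agreeing flip sets. For prefixes, freeing one
more coordinate `m` at most doubles the number of agreeing flip sets when `score m ≥ 0`;
otherwise every free score is negative, every completion agrees and both guarantees are `1`.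
So the guarantee of the top-`k` prefix is monotone in `k`, and the minimum is attained at the
first `k` for which it reaches `δ`.
-/

open Finset

lemma Finset.powerset_map {α β : Type*} (f : α ↪ β) (s : Finset α) :
    (s.map f).powerset = s.powerset.map (mapEmbedding f).toEmbedding := by
  ext G
  simp only [mem_powerset, mem_map, subset_map_iff, RelEmbedding.coe_toEmbedding,
    mapEmbedding_apply]
  constructor <;> rintro ⟨F, hF, rfl⟩ <;> exact ⟨F, hF, rfl⟩

lemma Nat.sInf_setOf_le_and_eq_iff {P : ℕ → Prop} (hP : Monotone P) {d : ℕ} (hd : P d)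
    (k : ℕ) : sInf {n | n ≤ d ∧ P n} = k ↔ P k ∧ (k = 0 ∨ ¬ P (k - 1)) := by
  have hmem : sInf {n | n ≤ d ∧ P n} ∈ {n | n ≤ d ∧ P n} := Nat.sInf_mem ⟨d, le_rfl, hd⟩
  constructor
  · rintro rfl
    refine ⟨hmem.2, or_iff_not_imp_left.mpr fun h0 hprev => ?_⟩
    have := Nat.sInf_le (s := {n | n ≤ d ∧ P n}) ⟨(Nat.sub_le _ _).trans hmem.1, hprev⟩
    omega
  · rintro ⟨hk, hprev⟩
    have hmin : ∀ n, P n → k ≤ n := fun n hn => by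
      by_contra! hlt
      rcases hprev with rfl | hprev
      · omega
      · exact hprev (hP (by omega) hn)
    exact le_antisymm (Nat.sInf_le ⟨hmin d hd, hk⟩) (hmin _ hmem.2)

section
variable {d : ℕ}

lemma Fin.val_add_le_of_strictMono {n : ℕ} {f : Fin n → Fin d} (hf : StrictMono f)
    (r : Fin n) : (f r : ℕ) + n ≤ r + d := by
  have h := card_le_card_of_injOn f (s := Ici r) (t := Ici (f r))
    (fun s hs => mem_Ici.mpr (hf.monotone (mem_Ici.mp hs))) hf.injective.injOn
  rw [Fin.card_Ici, Fin.card_Ici] at h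
  omega

def Fin.addLeftEmb {m n : ℕ} (h : m + n ≤ d) : Fin n ↪ Fin d :=
  ⟨fun r => ⟨m + r, by omega⟩, fun r s hrs => Fin.ext (by simpa using hrs)⟩

@[simp]
lemma Fin.val_addLeftEmb {m n : ℕ} (h : m + n ≤ d) (r : Fin n) :
    (Fin.addLeftEmb h r : ℕ) = m + r := rfl

lemma Fin.map_addLeftEmb {m n : ℕ} (h : m + n = d) :
    univ.map (Fin.addLeftEmb h.le) = ({i | m ≤ (i : ℕ)} : Finset (Fin d)) := by
  refine Finset.ext fun i => ?_
  simp only [mem_map, mem_univ, true_and, mem_filter]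
  constructor
  · rintro ⟨r, rfl⟩
    simp
  · intro hi
    exact ⟨⟨i - m, by omega⟩, Fin.ext (by simp; omega)⟩

def flipOn (x : Fin d → Bool) (F : Finset (Fin d)) : Fin d → Bool :=
  fun i => if i ∈ F then !x i else x i

lemma flipOn_empty (x : Fin d → Bool) : flipOn x ∅ = x := by
  funext i
  simp [flipOn]

lemma flipOn_injective (x : Fin d → Bool) : Function.Injective (flipOn x) := by
  intro F G h
  ext i
  have := congrFun h i
  by_cases hF : i ∈ F <;> by_cases hG : i ∈ G <;> simp_all [flipOn]

def freeCoords (y : Fin d → Option Bool) : Finset (Fin d) := {i | y i = none}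

lemma completions_eq_map_flipOn {x : Fin d → Bool} {y : Fin d → Option Bool}
    (hy : subsetOf y x) :
    completions y = (freeCoords y).powerset.map ⟨flipOn x, flipOn_injective x⟩ := by
  ext z
  simp only [completions, freeCoords, mem_filter, mem_univ, true_and, mem_map, mem_powerset,
    Function.Embedding.coeFn_mk]
  constructor
  · intro hz
    refine ⟨({i | z i ≠ x i} : Finset (Fin d)), fun i hi => ?_, funext fun i => ?_⟩
    · simp only [mem_filter, mem_univ, true_and] at hi ⊢
      cases hyi : y i with
      | none => rfl
      | some b => exact absurd ((hz i b hyi).trans (hy i b hyi).symm) hi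
    · simp only [flipOn, mem_filter, mem_univ, true_and]
      cases z i <;> cases x i <;> simp
  · rintro ⟨F, hF, rfl⟩ i b hyi
    have hi : i ∉ F := fun hi => by simpa [hyi] using hF hi
    simp [flipOn, hi, hy i b hyi]

lemma subsetOf_topk (x : Fin d → Bool) (m : ℕ) : subsetOf (topk x m) x := by
  intro i b hb
  by_cases hi : (i : ℕ) < m <;> simp_all [topk]

lemma freeCoords_topk (x : Fin d → Bool) (m : ℕ) :
    freeCoords (topk x m) = ({i | m ≤ (i : ℕ)} : Finset (Fin d)) := by
  ext i
  simp [freeCoords, topk]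

lemma card_freeCoords_topk (x : Fin d → Bool) {m : ℕ} (hm : m ≤ d) :
    #(freeCoords (topk x m)) = d - m := by
  rw [freeCoords_topk, ← Fin.map_addLeftEmb (n := d - m) (by omega), card_map, card_univ,
    Fintype.card_fin]

lemma definedCount_add_card_freeCoords (y : Fin d → Option Bool) :
    definedCount y + #(freeCoords y) = d := by
  simpa [definedCount, freeCoords] using
    card_filter_add_card_filter_not (s := univ) (fun i => (y i).isSome)

lemma definedCount_topk (x : Fin d → Bool) {m : ℕ} (hm : m ≤ d) :
    definedCount (topk x m) = m := by
  have := definedCount_add_card_freeCoords (topk x m)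
  rw [card_freeCoords_topk x hm] at this
  omega

section classifier
variable (w : Fin d → ℚ) (t : ℚ) (x : Fin d → Bool)

lemma sum_flipOn (F : Finset (Fin d)) :
    ∑ i, w i * (if flipOn x F i then 1 else 0) =
      ∑ i, w i * (if x i then 1 else 0) -
        (2 * (if linOut w t x then 1 else 0) - 1) * ∑ i ∈ F, score w t x i := by
  have hF : ∑ i ∈ F, score w t x i = ∑ i, if i ∈ F then score w t x i else 0 := by
    rw [sum_ite_mem, univ_inter]
  rw [hF, mul_sum, ← sum_sub_distrib]
  refine sum_congr rfl fun i _ => ?_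
  unfold score flipOn
  generalize linOut w t x = b
  generalize x i = a
  by_cases hi : i ∈ F <;> cases a <;> cases b <;> simp [hi] <;> ring

lemma linOut_flipOn_eq_of_sum_score_le {F G : Finset (Fin d)}
    (hsum : ∑ i ∈ G, score w t x i ≤ ∑ i ∈ F, score w t x i)
    (hF : linOut w t (flipOn x F) = linOut w t x) :
    linOut w t (flipOn x G) = linOut w t x := by
  unfold linOut at hF ⊢
  rw [sum_flipOn w t x F] at hF
  rw [sum_flipOn w t x G]
  unfold linOut at hF ⊢
  generalize ∑ i, w i * (if x i then 1 else 0) = V at hF ⊢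
  by_cases hx : t ≤ V <;> simp [hx] at hF ⊢ <;> linarith

def agreeCount (U : Finset (Fin d)) : ℕ :=
  #{F ∈ U.powerset | linOut w t (flipOn x F) = linOut w t x}

lemma prSame_eq_agreeCount {y : Fin d → Option Bool} (hy : subsetOf y x) :
    prSame w t x y = agreeCount w t x (freeCoords y) / 2 ^ #(freeCoords y) := by
  rw [prSame, completions_eq_map_flipOn hy, filter_map, card_map, card_map, card_powerset,
    agreeCount]
  push_cast
  rfl

lemma agreeCount_eq_two_pow_of_score_nonpos {U : Finset (Fin d)}
    (hU : ∀ i ∈ U, score w t x i ≤ 0) : agreeCount w t x U = 2 ^ #U := by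
  rw [agreeCount, filter_true_of_mem, card_powerset]
  intro F hF
  refine linOut_flipOn_eq_of_sum_score_le w t x (F := ∅) ?_ (by rw [flipOn_empty])
  rw [sum_empty]
  exact sum_nonpos fun i hi => hU i (mem_powerset.mp hF hi)

lemma prSame_eq_one_of_score_nonpos {y : Fin d → Option Bool} (hy : subsetOf y x)
    (hneg : ∀ i ∈ freeCoords y, score w t x i ≤ 0) : prSame w t x y = 1 := by
  rw [prSame_eq_agreeCount w t x hy, agreeCount_eq_two_pow_of_score_nonpos w t x hneg]
  push_cast
  exact div_self (by positivity)

lemma prSame_topk_self : prSame w t x (topk x d) = 1 :=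
  prSame_eq_one_of_score_nonpos w t x (subsetOf_topk x d) fun i hi => by
    simp [freeCoords_topk] at hi
    omega

lemma agreeCount_insert_le {U : Finset (Fin d)} {a : Fin d} (ha : a ∉ U)
    (hscore : 0 ≤ score w t x a) :
    agreeCount w t x (insert a U) ≤ 2 * agreeCount w t x U := by
  rw [agreeCount, powerset_insert, filter_union, filter_image, two_mul]
  refine (card_union_le _ _).trans
    (Nat.add_le_add_left (card_image_le.trans (card_le_card fun F => ?_)) _)
  simp only [mem_filter, mem_powerset]
  refine fun ⟨hF, hagree⟩ => ⟨hF, linOut_flipOn_eq_of_sum_score_le w t x ?_ hagree⟩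
  rw [sum_insert fun h => ha (hF h)]
  linarith

lemma agreeCount_map_le {α : Type*} (s : Finset α) (u v : α ↪ Fin d)
    (huv : ∀ r ∈ s, score w t x (v r) ≤ score w t x (u r)) :
    agreeCount w t x (s.map u) ≤ agreeCount w t x (s.map v) := by
  simp only [agreeCount, powerset_map, filter_map, card_map]
  refine card_le_card fun G => ?_
  simp only [mem_filter, mem_powerset, Function.comp_apply, RelEmbedding.coe_toEmbedding,
    mapEmbedding_apply]
  refine fun ⟨hG, hagree⟩ => ⟨hG, linOut_flipOn_eq_of_sum_score_le w t x ?_ hagree⟩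
  rw [sum_map, sum_map]
  exact sum_le_sum fun r hr => huv r (hG hr)

variable {w t x}

lemma agreeCount_le_agreeCount_last (hsorted : Antitone (score w t x)) (U : Finset (Fin d)) :
    agreeCount w t x U ≤ agreeCount w t x {i | d - #U ≤ (i : ℕ)} := by
  have hU : #U ≤ d := by simpa using card_le_univ U
  have hle : ∀ r, U.orderEmbOfFin rfl r ≤ Fin.addLeftEmb (m := d - #U) (by omega) r := by
    intro r
    have := Fin.val_add_le_of_strictMono (U.orderEmbOfFin rfl).strictMono r
    rw [Fin.le_def, Fin.val_addLeftEmb]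
    omega
  have hcount := agreeCount_map_le w t x univ (U.orderEmbOfFin rfl).toEmbedding _
    fun r _ => hsorted (hle r)
  rwa [map_orderEmbOfFin_univ, Fin.map_addLeftEmb (by omega)] at hcount

lemma prSame_le_prSame_topk (hsorted : Antitone (score w t x)) {y : Fin d → Option Bool}
    (hy : subsetOf y x) : prSame w t x y ≤ prSame w t x (topk x (definedCount y)) := by
  have hcount := definedCount_add_card_freeCoords y
  rw [show definedCount y = d - #(freeCoords y) by omega, prSame_eq_agreeCount w t x hy,
    prSame_eq_agreeCount w t x (subsetOf_topk x _), card_freeCoords_topk x (Nat.sub_le _ _),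
    freeCoords_topk, Nat.sub_sub_self (by omega)]
  gcongr
  exact agreeCount_le_agreeCount_last hsorted _

lemma prSame_topk_le_succ (hsorted : Antitone (score w t x)) (m : ℕ) :
    prSame w t x (topk x m) ≤ prSame w t x (topk x (m + 1)) := by
  by_cases hneg : ∀ i ∈ freeCoords (topk x m), score w t x i ≤ 0
  · have hneg' : ∀ i ∈ freeCoords (topk x (m + 1)), score w t x i ≤ 0 := fun i hi =>
      hneg i (by simp only [freeCoords_topk, mem_filter] at hi ⊢; exact ⟨hi.1, by omega⟩)
    rw [prSame_eq_one_of_score_nonpos w t x (subsetOf_topk x m) hneg,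
      prSame_eq_one_of_score_nonpos w t x (subsetOf_topk x _) hneg']
  obtain ⟨i, hi, hpos⟩ : ∃ i : Fin d, m ≤ (i : ℕ) ∧ 0 < score w t x i := by
    simpa [freeCoords_topk] using hneg
  have hm : m < d := by omega
  have hscore : 0 ≤ score w t x ⟨m, hm⟩ := hpos.le.trans (hsorted (Fin.le_def.mpr hi))
  have hinsert : freeCoords (topk x m) = insert ⟨m, hm⟩ (freeCoords (topk x (m + 1))) := by
    ext j
    simp only [freeCoords_topk, mem_filter, mem_insert, mem_univ, true_and, Fin.ext_iff]
    omega
  have hcount := agreeCount_insert_le w t x (U := freeCoords (topk x (m + 1)))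
    (by simp [freeCoords_topk]) hscore
  rw [← hinsert] at hcount
  rw [prSame_eq_agreeCount w t x (subsetOf_topk x m),
    prSame_eq_agreeCount w t x (subsetOf_topk x _), card_freeCoords_topk x hm.le,
    card_freeCoords_topk x hm, show d - m = d - (m + 1) + 1 by omega, pow_succ', ← div_div]
  gcongr
  rw [div_le_iff₀' two_pos]
  exact_mod_cast hcount

lemma prSame_topk_mono (hsorted : Antitone (score w t x)) :
    Monotone fun m => prSame w t x (topk x m) :=
  monotone_nat_of_le_succ (prSame_topk_le_succ hsorted)

lemma exists_sufficientReason_iff (hsorted : Antitone (score w t x)) (δ : ℚ) (n : ℕ) :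
    (∃ y, subsetOf y x ∧ definedCount y = n ∧ δ ≤ prSame w t x y) ↔
      n ≤ d ∧ δ ≤ prSame w t x (topk x n) := by
  constructor
  · rintro ⟨y, hy, rfl, hδ⟩
    exact ⟨(definedCount_add_card_freeCoords y).le.trans' le_self_add,
      hδ.trans (prSame_le_prSame_topk hsorted hy)⟩
  · rintro ⟨hn, hδ⟩
    exact ⟨topk x n, subsetOf_topk x n, definedCount_topk x hn, hδ⟩

end classifier

end

theorem minSR_iff_topk_general (d : ℕ) (w : Fin d → ℚ) (t : ℚ) (x : Fin d → Bool)
    (δ : ℚ) (hδ1 : δ ≤ 1)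
    (hsorted : ∀ i j : Fin d, i ≤ j → score w t x j ≤ score w t x i)
    (k : ℕ) :
    minSR w t x δ = k ↔
      (δ ≤ prSame w t x (topk x k) ∧
        (k = 0 ∨ ¬ δ ≤ prSame w t x (topk x (k - 1)))) := by
  have hsets : {k | ∃ y, subsetOf y x ∧ definedCount y = k ∧ δ ≤ prSame w t x y} =
      {n | n ≤ d ∧ δ ≤ prSame w t x (topk x n)} :=
    Set.ext (exists_sufficientReason_iff hsorted δ)
  rw [minSR, hsets]
  exact Nat.sInf_setOf_le_and_eq_iff (fun m n hmn hm => hm.trans (prSame_topk_mono hsorted hmn))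
    (by rwa [prSame_topk_self]) k

theorem minSR_iff_topk (d : ℕ) (hd : 1 ≤ d) (w : Fin d → ℚ) (t : ℚ) (x : Fin d → Bool)
    (δ : ℚ) (hδ0 : 0 < δ) (hδ1 : δ ≤ 1)
    (hsorted : ∀ i j : Fin d, i ≤ j → score w t x j ≤ score w t x i)
    (k : ℕ) (hk : k ≤ d) :
    minSR w t x δ = k ↔
      (δ ≤ prSame w t x (topk x k) ∧
        (k = 0 ∨ ¬ δ ≤ prSame w t x (topk x (k - 1)))) :=
  minSR_iff_topk_general d w t x δ hδ1 hsorted k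
end

section
/- Let L be a linear classifier on {0,1}^d, x ∈ {0,1}^d, D a product distribution, and δ ∈ (0,1]. Call y ⊆ x a δ-SR if Pr_{z ∼ D(y)}[L(z)=L(x)] ≥ δ. Say y is locally minimal if it is a δ-SR and for every defined coordinate i of y, the instance y ⊖ i (undefining i) is not a δ-SR. Say y is subset-minimal if it is a δ-SR and no y' ⊊ y (strictly fewer defined coordinates, agreeing with y on all its defined coordinates) is a δ-SR. Then every locally minimal δ-SR for a linear model under a product distribution is subset-minimal. -/
/-- Weight of an instance `z` under the product distribution with parameters `p`. -/
def prodWeight {d : ℕ} (p : Fin d → ℝ) (z : Fin d → Bool) : ℝ :=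
  ∏ i, if z i then p i else 1 - p i

/-- `Pr_{z ~ D(y)}[L(z) = L(x)]`: the product distribution `D` conditioned on the
completions of `y`. -/
noncomputable def prSameD {d : ℕ} (w : Fin d → ℚ) (t : ℚ) (p : Fin d → ℝ)
    (x : Fin d → Bool) (y : Fin d → Option Bool) : ℝ :=
  (∑ z ∈ (completions y).filter (fun z => linOut w t z = linOut w t x), prodWeight p z)
    / ∑ z ∈ completions y, prodWeight p z

/-- `y` is a `δ`-sufficient reason for `(L, x)` under the product distribution `D`. -/
def IsDeltaSR {d : ℕ} (w : Fin d → ℚ) (t : ℚ) (p : Fin d → ℝ) (x : Fin d → Bool)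
    (δ : ℝ) (y : Fin d → Option Bool) : Prop :=
  subsetOf y x ∧ δ ≤ prSameD w t p x y

noncomputable def Wt {d : ℕ} (p : Fin d → ℝ) (y : Fin d → Option Bool) : ℝ :=
  ∑ z ∈ completions y, prodWeight p z

noncomputable def Nm {d : ℕ} (w : Fin d → ℚ) (t : ℚ) (p : Fin d → ℝ) (x : Fin d → Bool)
    (y : Fin d → Option Bool) : ℝ :=
  ∑ z ∈ completions y, if linOut w t z = linOut w t x then prodWeight p z else 0

lemma prSameD_eq {d : ℕ} (w : Fin d → ℚ) (t : ℚ) (p : Fin d → ℝ) (x : Fin d → Bool)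
    (y : Fin d → Option Bool) : prSameD w t p x y = Nm w t p x y / Wt p y := by
  unfold prSameD Nm Wt
  rw [Finset.sum_filter]

lemma mem_completions {d : ℕ} {y : Fin d → Option Bool} {z : Fin d → Bool} :
    z ∈ completions y ↔ ∀ i b, y i = some b → z i = b := by
  simp [completions]

lemma prodWeight_nonneg {d : ℕ} {p : Fin d → ℝ} (hp : ∀ i, 0 ≤ p i ∧ p i ≤ 1)
    (z : Fin d → Bool) : 0 ≤ prodWeight p z :=
  Finset.prod_nonneg fun i _ => by rcases hp i with ⟨h0, h1⟩; split <;> linarith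

lemma Wt_nonneg {d : ℕ} {p : Fin d → ℝ} (hp : ∀ i, 0 ≤ p i ∧ p i ≤ 1)
    (y : Fin d → Option Bool) : 0 ≤ Wt p y :=
  Finset.sum_nonneg fun z _ => prodWeight_nonneg hp z

lemma Nm_nonneg {d : ℕ} (w : Fin d → ℚ) (t : ℚ) {p : Fin d → ℝ}
    (hp : ∀ i, 0 ≤ p i ∧ p i ≤ 1) (x : Fin d → Bool) (y : Fin d → Option Bool) :
    0 ≤ Nm w t p x y :=
  Finset.sum_nonneg fun z _ => by
    split
    · exact prodWeight_nonneg hp z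
    · exact le_refl 0

lemma completions_anti {d : ℕ} {u v : Fin d → Option Bool}
    (h : ∀ i b, u i = some b → v i = some b) : completions v ⊆ completions u := fun z hz =>
  mem_completions.2 fun i b hib => mem_completions.1 hz i b (h i b hib)

lemma Wt_mono {d : ℕ} {p : Fin d → ℝ} (hp : ∀ i, 0 ≤ p i ∧ p i ≤ 1)
    {u v : Fin d → Option Bool} (h : ∀ i b, u i = some b → v i = some b) :
    Wt p v ≤ Wt p u :=
  Finset.sum_le_sum_of_subset_of_nonneg (completions_anti h)
    (fun z _ _ => prodWeight_nonneg hp z)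

lemma completions_split {d : ℕ} (u : Fin d → Option Bool) (i : Fin d) (hu : u i = none) :
    completions u = completions (Function.update u i (some true))
      ∪ completions (Function.update u i (some false)) := by
  ext z
  simp only [Finset.mem_union, mem_completions]
  constructor
  · intro h
    cases hz : z i
    · right; intro j b hj
      rcases eq_or_ne j i with rfl | hji
      · rw [Function.update_self] at hj
        rw [← Option.some_inj.1 hj]; exact hz
      · rw [Function.update_of_ne hji] at hj; exact h j b hj
    · left; intro j b hj
      rcases eq_or_ne j i with rfl | hji
      · rw [Function.update_self] at hj
        rw [← Option.some_inj.1 hj]; exact hz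
      · rw [Function.update_of_ne hji] at hj; exact h j b hj
  · rintro (h | h) j b hj
    · refine h j b ?_
      rcases eq_or_ne j i with rfl | hji
      · rw [hu] at hj; exact absurd hj (by simp)
      · rw [Function.update_of_ne hji]; exact hj
    · refine h j b ?_
      rcases eq_or_ne j i with rfl | hji
      · rw [hu] at hj; exact absurd hj (by simp)
      · rw [Function.update_of_ne hji]; exact hj

lemma completions_disj {d : ℕ} (u : Fin d → Option Bool) (i : Fin d) :
    Disjoint (completions (Function.update u i (some true)))
      (completions (Function.update u i (some false))) := by
  rw [Finset.disjoint_left]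
  intro z h1 h2
  have e1 := mem_completions.1 h1 i true (Function.update_self i (some true) u)
  have e2 := mem_completions.1 h2 i false (Function.update_self i (some false) u)
  rw [e1] at e2; exact Bool.noConfusion e2

lemma sum_split {d : ℕ} (f : (Fin d → Bool) → ℝ) (u : Fin d → Option Bool) (i : Fin d)
    (hu : u i = none) (b : Bool) :
    ∑ z ∈ completions u, f z
      = (∑ z ∈ completions (Function.update u i (some b)), f z)
        + ∑ z ∈ completions (Function.update u i (some (!b))), f z := by
  cases b
  · rw [completions_split u i hu, Finset.sum_union (completions_disj u i)]
    simp [add_comm]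
  · rw [completions_split u i hu, Finset.sum_union (completions_disj u i)]
    simp

lemma mem_comp_update {d : ℕ} {u : Fin d → Option Bool} {i : Fin d} {c : Bool}
    {z : Fin d → Bool} (h : z ∈ completions (Function.update u i (some c))) : z i = c :=
  mem_completions.1 h i c (Function.update_self i (some c) u)

lemma sum_comp_update {d : ℕ} (u : Fin d → Option Bool) (i : Fin d) (c c' : Bool)
    (g : (Fin d → Bool) → ℝ) :
    ∑ z ∈ completions (Function.update u i (some c)), g z
      = ∑ z ∈ completions (Function.update u i (some c')), g (Function.update z i c) := by
  refine Finset.sum_nbij' (fun z => Function.update z i c') (fun z => Function.update z i c)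
    ?_ ?_ ?_ ?_ ?_
  · intro z hz
    refine mem_completions.2 fun j b hj => ?_
    rcases eq_or_ne j i with rfl | hji
    · rw [Function.update_self] at hj ⊢; exact Option.some_inj.1 hj
    · rw [Function.update_of_ne hji] at hj ⊢
      exact mem_completions.1 hz j b (by rw [Function.update_of_ne hji]; exact hj)
  · intro z hz
    refine mem_completions.2 fun j b hj => ?_
    rcases eq_or_ne j i with rfl | hji
    · rw [Function.update_self] at hj ⊢; exact Option.some_inj.1 hj
    · rw [Function.update_of_ne hji] at hj ⊢
      exact mem_completions.1 hz j b (by rw [Function.update_of_ne hji]; exact hj)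
  · intro z hz
    rw [Function.update_idem]
    conv_rhs => rw [← Function.update_eq_self i z]
    rw [mem_comp_update hz]
  · intro z hz
    rw [Function.update_idem]
    conv_rhs => rw [← Function.update_eq_self i z]
    rw [mem_comp_update hz]
  · intro z hz
    congr 1
    rw [Function.update_idem]
    conv_lhs => rw [← Function.update_eq_self i z]
    rw [mem_comp_update hz]

lemma sum_update_lin {d : ℕ} (w : Fin d → ℚ) (z : Fin d → Bool) (i : Fin d) (b : Bool) :
    ∑ j, w j * (if Function.update z i b j then (1:ℚ) else 0)
      = w i * (if b then 1 else 0)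
        + ∑ j ∈ Finset.univ.erase i, w j * (if z j then 1 else 0) := by
  rw [← Finset.add_sum_erase _ _ (Finset.mem_univ i), Function.update_self]
  congr 1
  refine Finset.sum_congr rfl fun j hj => ?_
  rw [Function.update_of_ne (Finset.mem_erase.1 hj).1]

lemma ind_helper1 {a b tt s : ℚ} (hab : a ≤ b) (hts : tt ≤ s) :
    (if decide (tt ≤ a) = decide (tt ≤ s) then (1:ℝ) else 0)
      ≤ if decide (tt ≤ b) = decide (tt ≤ s) then 1 else 0 := by
  rw [decide_eq_true hts]
  by_cases h : tt ≤ a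
  · rw [decide_eq_true h, decide_eq_true (h.trans hab)]
  · rw [decide_eq_false h]
    split_ifs <;> simp_all

lemma ind_helper2 {a b tt s : ℚ} (hba : b ≤ a) (hts : s < tt) :
    (if decide (tt ≤ a) = decide (tt ≤ s) then (1:ℝ) else 0)
      ≤ if decide (tt ≤ b) = decide (tt ≤ s) then 1 else 0 := by
  rw [decide_eq_false (not_le.2 hts)]
  by_cases h : tt ≤ b
  · rw [decide_eq_true h, decide_eq_true (h.trans hba)]
  · rw [decide_eq_false h]
    split_ifs <;> simp_all

lemma ind_mono {d : ℕ} (w : Fin d → ℚ) (t : ℚ) (x : Fin d → Bool) (i : Fin d)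
    (h : 0 ≤ score w t x i) (z : Fin d → Bool) :
    (if linOut w t (Function.update z i (!(x i))) = linOut w t x then (1:ℝ) else 0)
      ≤ if linOut w t (Function.update z i (x i)) = linOut w t x then 1 else 0 := by
  unfold linOut
  unfold score linOut at h
  rw [sum_update_lin w z i (x i), sum_update_lin w z i (!(x i))]
  rcases le_or_gt t (∑ j, w j * (if x j then (1:ℚ) else 0)) with hts | hts
  · rw [decide_eq_true hts] at h
    cases hx : x i
    · rw [hx] at h
      simp only [hx, Bool.not_false]
      apply ind_helper1 _ hts
      have : w i ≤ 0 := by norm_num at h; linarith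
      norm_num; linarith
    · rw [hx] at h
      simp only [hx, Bool.not_true]
      apply ind_helper1 _ hts
      have : 0 ≤ w i := by norm_num at h; linarith
      norm_num; linarith
  · rw [decide_eq_false (not_le.2 hts)] at h
    cases hx : x i
    · rw [hx] at h
      simp only [hx, Bool.not_false]
      apply ind_helper2 _ hts
      have : 0 ≤ w i := by norm_num at h; linarith
      norm_num; linarith
    · rw [hx] at h
      simp only [hx, Bool.not_true]
      apply ind_helper2 _ hts
      have : w i ≤ 0 := by norm_num at h; linarith
      norm_num; linarith

lemma cross_ineq {d : ℕ} (w : Fin d → ℚ) (t : ℚ) {p : Fin d → ℝ}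
    (hp : ∀ i, 0 ≤ p i ∧ p i ≤ 1)
    (x : Fin d → Bool) (u : Fin d → Option Bool) (i : Fin d) (b : Bool)
    (hind : ∀ z : Fin d → Bool,
      (if linOut w t (Function.update z i (!b)) = linOut w t x then (1:ℝ) else 0)
        ≤ if linOut w t (Function.update z i b) = linOut w t x then 1 else 0) :
    Nm w t p x (Function.update u i (some (!b))) * Wt p (Function.update u i (some b))
      ≤ Nm w t p x (Function.update u i (some b))
          * Wt p (Function.update u i (some (!b))) := by
  set R : (Fin d → Bool) → ℝ :=
    fun z => ∏ j ∈ Finset.univ.erase i, (if z j then p j else 1 - p j) with hR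
  set F : Bool → ℝ := fun c => if c then p i else 1 - p i with hF
  have hPW : ∀ z : Fin d → Bool, prodWeight p z = F (z i) * R z := fun z =>
    (Finset.mul_prod_erase Finset.univ _ (Finset.mem_univ i)).symm
  have hRupdate : ∀ (z : Fin d → Bool) (c : Bool), R (Function.update z i c) = R z := by
    intro z c
    refine Finset.prod_congr rfl fun j hj => ?_
    rw [Function.update_of_ne (Finset.mem_erase.1 hj).1]
  have hRnonneg : ∀ z, 0 ≤ R z := fun z => Finset.prod_nonneg fun j _ => by
    rcases hp j with ⟨h0, h1⟩; split <;> linarith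
  have hFnonneg : ∀ c, 0 ≤ F c := fun c => by
    rcases hp i with ⟨h0, h1⟩; cases c <;> simp [hF] <;> linarith
  set T : ℝ := ∑ z ∈ completions (Function.update u i (some b)), R z with hT
  set A : Bool → ℝ := fun c => ∑ z ∈ completions (Function.update u i (some b)),
    if linOut w t (Function.update z i c) = linOut w t x then R z else 0 with hA
  have hupdz : ∀ z ∈ completions (Function.update u i (some b)),
      Function.update z i b = z := by
    intro z hz
    conv_rhs => rw [← Function.update_eq_self i z]
    rw [mem_comp_update hz]
  have hWb : Wt p (Function.update u i (some b)) = F b * T := by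
    rw [hT, Finset.mul_sum]
    refine Finset.sum_congr rfl fun z hz => ?_
    rw [hPW z, mem_comp_update hz]
  have hWnb : Wt p (Function.update u i (some (!b))) = F (!b) * T := by
    unfold Wt
    rw [sum_comp_update u i (!b) b (prodWeight p), hT, Finset.mul_sum]
    refine Finset.sum_congr rfl fun z _ => ?_
    rw [hPW, Function.update_self, hRupdate]
  have hNb : Nm w t p x (Function.update u i (some b)) = F b * A b := by
    unfold Nm
    rw [hA, Finset.mul_sum]
    refine Finset.sum_congr rfl fun z hz => ?_
    rw [hupdz z hz]
    split_ifs
    · rw [hPW z, mem_comp_update hz]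
    · rw [mul_zero]
  have hNnb : Nm w t p x (Function.update u i (some (!b))) = F (!b) * A (!b) := by
    unfold Nm
    rw [sum_comp_update u i (!b) b
      (fun z => if linOut w t z = linOut w t x then prodWeight p z else 0),
      hA, Finset.mul_sum]
    refine Finset.sum_congr rfl fun z _ => ?_
    split_ifs
    · rw [hPW, Function.update_self, hRupdate]
    · rw [mul_zero]
  have hAle : A (!b) ≤ A b := by
    refine Finset.sum_le_sum fun z _ => ?_
    have h1 := hind z
    have h0 := hRnonneg z
    split_ifs at h1 ⊢ <;> try linarith
  have hTnonneg : 0 ≤ T := by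
    rw [hT]; exact Finset.sum_nonneg fun z _ => hRnonneg z
  have key : (F b * F (!b)) * (A (!b) * T) ≤ (F b * F (!b)) * (A b * T) :=
    mul_le_mul_of_nonneg_left (mul_le_mul_of_nonneg_right hAle hTnonneg)
      (mul_nonneg (hFnonneg b) (hFnonneg (!b)))
  rw [hWb, hWnb, hNb, hNnb]
  have e1 : F (!b) * A (!b) * (F b * T) = (F b * F (!b)) * (A (!b) * T) := by ring
  have e2 : F b * A b * (F (!b) * T) = (F b * F (!b)) * (A b * T) := by ring
  rw [e1, e2]
  exact key

lemma mediant_le {a b c e : ℝ} (hb : 0 < b) (he : 0 ≤ e) (h : c * b ≤ a * e) :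
    (a + c) / (b + e) ≤ a / b := by
  rw [div_le_div_iff₀ (by linarith) hb]
  nlinarith

lemma mediant_ge {a b c e : ℝ} (hb : 0 < b) (he : 0 ≤ e) (h : a * e ≤ c * b) :
    a / b ≤ (a + c) / (b + e) := by
  rw [div_le_div_iff₀ hb (by linarith)]
  nlinarith

lemma step_up {d : ℕ} (w : Fin d → ℚ) (t : ℚ) {p : Fin d → ℝ}
    (hp : ∀ i, 0 ≤ p i ∧ p i ≤ 1) (x : Fin d → Bool)
    (u : Fin d → Option Bool) (i : Fin d) (hu : u i = none)
    (hsc : 0 ≤ score w t x i)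
    (hW : 0 < Wt p (Function.update u i (some (x i)))) :
    prSameD w t p x u ≤ prSameD w t p x (Function.update u i (some (x i))) := by
  rw [prSameD_eq, prSameD_eq]
  have hsplitN : Nm w t p x u = Nm w t p x (Function.update u i (some (x i)))
      + Nm w t p x (Function.update u i (some (!(x i)))) :=
    sum_split _ u i hu (x i)
  have hsplitW : Wt p u = Wt p (Function.update u i (some (x i)))
      + Wt p (Function.update u i (some (!(x i)))) :=
    sum_split _ u i hu (x i)
  rw [hsplitN, hsplitW]
  exact mediant_le hW (Wt_nonneg hp _) (cross_ineq w t hp x u i (x i) (ind_mono w t x i hsc))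

lemma ind_mono_neg {d : ℕ} (w : Fin d → ℚ) (t : ℚ) (x : Fin d → Bool) (i : Fin d)
    (h : score w t x i ≤ 0) (z : Fin d → Bool) :
    (if linOut w t (Function.update z i (x i)) = linOut w t x then (1:ℝ) else 0)
      ≤ if linOut w t (Function.update z i (!(x i))) = linOut w t x then 1 else 0 := by
  unfold linOut
  unfold score linOut at h
  rw [sum_update_lin w z i (x i), sum_update_lin w z i (!(x i))]
  rcases le_or_gt t (∑ j, w j * (if x j then (1:ℚ) else 0)) with hts | hts
  · rw [decide_eq_true hts] at h
    cases hx : x i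
    · rw [hx] at h
      simp only [hx, Bool.not_false]
      apply ind_helper1 _ hts
      have : 0 ≤ w i := by norm_num at h; linarith
      norm_num; linarith
    · rw [hx] at h
      simp only [hx, Bool.not_true]
      apply ind_helper1 _ hts
      have : w i ≤ 0 := by norm_num at h; linarith
      norm_num; linarith
  · rw [decide_eq_false (not_le.2 hts)] at h
    cases hx : x i
    · rw [hx] at h
      simp only [hx, Bool.not_false]
      apply ind_helper2 _ hts
      have : w i ≤ 0 := by norm_num at h; linarith
      norm_num; linarith
    · rw [hx] at h
      simp only [hx, Bool.not_true]
      apply ind_helper2 _ hts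
      have : 0 ≤ w i := by norm_num at h; linarith
      norm_num; linarith

lemma step_down {d : ℕ} (w : Fin d → ℚ) (t : ℚ) {p : Fin d → ℝ}
    (hp : ∀ i, 0 ≤ p i ∧ p i ≤ 1) (x : Fin d → Bool)
    (u : Fin d → Option Bool) (i : Fin d) (hu : u i = none)
    (hsc : score w t x i ≤ 0)
    (hW : 0 < Wt p (Function.update u i (some (x i)))) :
    prSameD w t p x (Function.update u i (some (x i))) ≤ prSameD w t p x u := by
  rw [prSameD_eq, prSameD_eq]
  have hsplitN : Nm w t p x u = Nm w t p x (Function.update u i (some (x i)))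
      + Nm w t p x (Function.update u i (some (!(x i)))) :=
    sum_split _ u i hu (x i)
  have hsplitW : Wt p u = Wt p (Function.update u i (some (x i)))
      + Wt p (Function.update u i (some (!(x i)))) :=
    sum_split _ u i hu (x i)
  rw [hsplitN, hsplitW]
  have hind : ∀ z : Fin d → Bool,
      (if linOut w t (Function.update z i (!(!(x i)))) = linOut w t x then (1:ℝ) else 0)
        ≤ if linOut w t (Function.update z i (!(x i))) = linOut w t x then 1 else 0 := by
    intro z
    rw [Bool.not_not]
    exact ind_mono_neg w t x i hsc z
  have hcross := cross_ineq w t hp x u i (!(x i)) hind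
  simp only [Bool.not_not] at hcross
  exact mediant_ge hW (Wt_nonneg hp _) hcross

lemma chain_up {d : ℕ} (w : Fin d → ℚ) (t : ℚ) {p : Fin d → ℝ}
    (hp : ∀ i, 0 ≤ p i ∧ p i ≤ 1) (x : Fin d → Bool)
    (y : Fin d → Option Bool) (hyx : subsetOf y x) (hWy : 0 < Wt p y)
    (hscore : ∀ j, (y j).isSome → 0 ≤ score w t x j)
    (s : Finset (Fin d)) :
    ∀ u : Fin d → Option Bool,
      (∀ j b, u j = some b → y j = some b) →
      (∀ j ∈ s, u j = none ∧ (y j).isSome) →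
      prSameD w t p x u ≤ prSameD w t p x (fun j => if j ∈ s then some (x j) else u j) := by
  induction s using Finset.induction with
  | empty => intro u _ _; simp
  | @insert a s' ha ih =>
    intro u hu hs
    obtain ⟨hua, hya⟩ := hs a (Finset.mem_insert_self a s')
    obtain ⟨ba, hba⟩ := Option.isSome_iff_exists.1 hya
    have hxa : x a = ba := hyx a ba hba
    have hu1y : ∀ j b, Function.update u a (some (x a)) j = some b → y j = some b := by
      intro j b hj
      rcases eq_or_ne j a with rfl | hja
      · rw [Function.update_self] at hj
        rw [hba, ← hj, hxa]
      · rw [Function.update_of_ne hja] at hj; exact hu j b hj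
    have hW1 : 0 < Wt p (Function.update u a (some (x a))) :=
      lt_of_lt_of_le hWy (Wt_mono hp hu1y)
    have h1 : prSameD w t p x u ≤ prSameD w t p x (Function.update u a (some (x a))) :=
      step_up w t hp x u a hua (hscore a hya) hW1
    have h2 := ih (Function.update u a (some (x a))) hu1y (fun j hj => by
      have hja : j ≠ a := fun h => ha (h ▸ hj)
      rw [Function.update_of_ne hja]
      exact hs j (Finset.mem_insert_of_mem hj))
    have heq : (fun j => if j ∈ s' then some (x j) else Function.update u a (some (x a)) j)
        = fun j => if j ∈ insert a s' then some (x j) else u j := by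
      funext j
      rcases eq_or_ne j a with rfl | hja
      · simp [ha, Function.update_self]
      · by_cases hj : j ∈ s' <;>
          simp [hj, hja, Function.update_of_ne hja, Finset.mem_insert]
    rw [heq] at h2
    exact h1.trans h2

lemma Wt_pos_of_SR {d : ℕ} (w : Fin d → ℚ) (t : ℚ) {p : Fin d → ℝ}
    (hp : ∀ i, 0 ≤ p i ∧ p i ≤ 1) (x : Fin d → Bool) {δ : ℝ} (hδ0 : 0 < δ)
    {y : Fin d → Option Bool} (h : δ ≤ prSameD w t p x y) : 0 < Wt p y := by
  rcases lt_or_eq_of_le (Wt_nonneg hp y) with h0 | h0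
  · exact h0
  · exfalso
    rw [prSameD_eq, ← h0, div_zero] at h
    linarith

theorem locally_minimal_is_subset_minimal (d : ℕ) (hd : 1 ≤ d) (w : Fin d → ℚ) (t : ℚ)
    (p : Fin d → ℝ) (hp : ∀ i, 0 ≤ p i ∧ p i ≤ 1)
    (x : Fin d → Bool) (δ : ℝ) (hδ0 : 0 < δ) (hδ1 : δ ≤ 1)
    (y : Fin d → Option Bool)
    (hSR : IsDeltaSR w t p x δ y)
    (hloc : ∀ i : Fin d, (y i).isSome →
      ¬ IsDeltaSR w t p x δ (Function.update y i none)) :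
    ¬ ∃ y' : Fin d → Option Bool,
        (∀ i, ∀ b, y' i = some b → y i = some b) ∧ y' ≠ y ∧
          IsDeltaSR w t p x δ y' := by
  rintro ⟨y', hsub, hne, hy'x, hy'δ⟩
  obtain ⟨hyx, hyδ⟩ := hSR
  have hWy : 0 < Wt p y := Wt_pos_of_SR w t hp x hδ0 hyδ
  have hscore : ∀ j : Fin d, (y j).isSome → 0 ≤ score w t x j := by
    intro j hj
    by_contra hneg
    push_neg at hneg
    obtain ⟨bj, hbj⟩ := Option.isSome_iff_exists.1 hj
    have hxj : x j = bj := hyx j bj hbj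
    have hupd : Function.update (Function.update y j none) j (some (x j)) = y := by
      funext k
      rcases eq_or_ne k j with rfl | hkj
      · rw [Function.update_self, hxj, hbj]
      · rw [Function.update_of_ne hkj, Function.update_of_ne hkj]
    have hstep := step_down w t hp x (Function.update y j none) j
      (Function.update_self j none y) (le_of_lt hneg) (by rw [hupd]; exact hWy)
    rw [hupd] at hstep
    have hsub' : subsetOf (Function.update y j none) x := by
      intro k b hk
      rcases eq_or_ne k j with rfl | hkj
      · rw [Function.update_self] at hk; exact absurd hk (by simp)
      · rw [Function.update_of_ne hkj] at hk; exact hyx k b hk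
    exact hloc j hj ⟨hsub', le_trans hyδ hstep⟩
  have hne' : ∃ i, y' i ≠ y i := by
    by_contra h; push_neg at h; exact hne (funext h)
  obtain ⟨i₀, hi₀⟩ := hne'
  have hy'i₀ : y' i₀ = none := by
    cases hc : y' i₀ with
    | none => rfl
    | some b => exact absurd (hc.trans (hsub i₀ b hc).symm) hi₀
  have hyi₀ : (y i₀).isSome := by
    cases hc : y i₀ with
    | none => exact absurd (hy'i₀.trans hc.symm) hi₀
    | some b => rfl
  set s : Finset (Fin d) :=
    Finset.univ.filter (fun j => (y j).isSome ∧ y' j = none ∧ j ≠ i₀) with hs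
  have hchain := chain_up w t hp x y hyx hWy hscore s y' hsub (fun j hj => by
    simp only [hs, Finset.mem_filter] at hj
    exact ⟨hj.2.2.1, hj.2.1⟩)
  have heq : (fun j => if j ∈ s then some (x j) else y' j) = Function.update y i₀ none := by
    funext j
    rcases eq_or_ne j i₀ with rfl | hji
    · have hns : j ∉ s := by simp [hs]
      simp only [hns, if_false, Function.update_self, hy'i₀]
    · rw [Function.update_of_ne hji]
      by_cases hj : j ∈ s
      · simp only [hj, if_true]
        have hjs : (y j).isSome := by
          simp only [hs, Finset.mem_filter] at hj; exact hj.2.1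
        obtain ⟨b, hb⟩ := Option.isSome_iff_exists.1 hjs
        rw [hb, hyx j b hb]
      · simp only [hj, if_false]
        cases hc : y j with
        | none =>
          cases hc' : y' j with
          | none => rfl
          | some b => exact absurd ((hsub j b hc').symm.trans hc) (by simp)
        | some b =>
          cases hc' : y' j with
          | some b' => exact (hsub j b' hc').symm.trans hc
          | none =>
            exfalso; apply hj
            simp only [hs, Finset.mem_filter, Finset.mem_univ, true_and]
            exact ⟨by rw [hc]; rfl, hc', hji⟩
  rw [heq] at hchain
  have hsub0 : subsetOf (Function.update y i₀ none) x := by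
    intro k b hk
    rcases eq_or_ne k i₀ with rfl | hki
    · rw [Function.update_self] at hk; exact absurd hk (by simp)
    · rw [Function.update_of_ne hki] at hk; exact hyx k b hk
  exact hloc i₀ hyi₀ ⟨hsub0, le_trans hy'δ hchain⟩
end
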